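/- arXiv:1710.11224 — 3 statements merged into one kernel-verified Lean document; each statement's English description precedes it below -/
import Mathlib

section
/- Let u be an integer with 2 ≤ u ≤ 12, let (n, m, m') be a permutation of (12, 10, 8), and let α, β, γ be positive integers. If D := α/(u·n) + β/m + γ/m' - 1/u is positive, then D ≥ 1/360, with the minimum 1/360 attained at u = 3, (n,m,m') = (12,10,8), α = 4, β = γ = 1. -/
set_option maxHeartbeats 1000000

private lemma abd_aux3 (u α β γ ca cb cc : ℤ) (hu : 2 ≤ u) (hu' : u ≤ 12)
    (hα : 1 ≤ α) (hβ : 1 ≤ β) (hγ : 1 ≤ γ)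
    (hc : ca = 10 ∧ cb = 12 ∧ cc = 15 ∨ ca = 10 ∧ cb = 15 ∧ cc = 12 ∨
          ca = 12 ∧ cb = 10 ∧ cc = 15 ∨ ca = 12 ∧ cb = 15 ∧ cc = 10 ∨
          ca = 15 ∧ cb = 10 ∧ cc = 12 ∨ ca = 15 ∧ cb = 12 ∧ cc = 10)
    (hN : 0 < ca * α + u * (cb * β) + u * (cc * γ) - 120) :
    u ≤ 3 * (ca * α + u * (cb * β) + u * (cc * γ) - 120) := by
  obtain (⟨h1,h2,h3⟩|⟨h1,h2,h3⟩|⟨h1,h2,h3⟩|⟨h1,h2,h3⟩|⟨h1,h2,h3⟩|⟨h1,h2,h3⟩) := hc <;>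
    subst h1 h2 h3 <;> interval_cases u <;> omega

private lemma abd_auxQ (u N : ℤ) (D : ℚ) (hu : 2 ≤ u)
    (hDeq : D * (120 * u) = (N : ℚ)) (h3 : u ≤ 3 * N) : 1 / 360 ≤ D := by
  have hu0 : (0:ℚ) < u := by exact_mod_cast (by linarith : (0:ℤ) < u)
  have h3' : (u:ℚ) ≤ 3 * N := by exact_mod_cast h3
  nlinarith [hDeq, h3', hu0]

private lemma abd_case (u α β γ ca cb cc : ℤ) (D : ℚ) (hu : 2 ≤ u) (hu' : u ≤ 12)
    (hα : 1 ≤ α) (hβ : 1 ≤ β) (hγ : 1 ≤ γ)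
    (hc : ca = 10 ∧ cb = 12 ∧ cc = 15 ∨ ca = 10 ∧ cb = 15 ∧ cc = 12 ∨
          ca = 12 ∧ cb = 10 ∧ cc = 15 ∨ ca = 12 ∧ cb = 15 ∧ cc = 10 ∨
          ca = 15 ∧ cb = 10 ∧ cc = 12 ∨ ca = 15 ∧ cb = 12 ∧ cc = 10)
    (hDeq : D * (120 * u) = ((ca * α + u * (cb * β) + u * (cc * γ) - 120 : ℤ) : ℚ))
    (hpos : 0 < D) : 1 / 360 ≤ D := by
  have hu0 : (0:ℚ) < u := by exact_mod_cast (by linarith : (0:ℤ) < u)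
  have hNpos : (0:ℚ) < ((ca * α + u * (cb * β) + u * (cc * γ) - 120 : ℤ) : ℚ) := by
    rw [← hDeq]; positivity
  have hN : 0 < ca * α + u * (cb * β) + u * (cc * γ) - 120 := by exact_mod_cast hNpos
  exact abd_auxQ u _ D hu hDeq (abd_aux3 u α β γ ca cb cc hu hu' hα hβ hγ hc hN)

theorem abelian_degree_bound (u n m m' α β γ : ℤ)
    (hu : 2 ≤ u) (hu' : u ≤ 12)
    (hperm : ({n, m, m'} : Multiset ℤ) = ({12, 10, 8} : Multiset ℤ))
    (hα : 1 ≤ α) (hβ : 1 ≤ β) (hγ : 1 ≤ γ)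
    (D : ℚ)
    (hD : D = (α : ℚ) / (u * n) + (β : ℚ) / m + (γ : ℚ) / m' - 1 / u)
    (hpos : 0 < D) :
    1 / 360 ≤ D ∧
      (4 : ℚ) / (3 * 12) + 1 / 10 + 1 / 8 - 1 / 3 = 1 / 360 := by
  refine ⟨?_, by norm_num⟩
  have hu0 : (0:ℚ) < u := by exact_mod_cast (by linarith : (0:ℤ) < u)
  have hu0' : (u:ℚ) ≠ 0 := ne_of_gt hu0
  have hn : n = 12 ∨ n = 10 ∨ n = 8 := by
    have : n ∈ ({12,10,8} : Multiset ℤ) := by rw [← hperm]; simp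
    simpa using this
  -- helper to finish a case once n, m, m' are known literals
  rcases hn with hn | hn | hn <;> subst hn
  · have hmm : ({m, m'} : Multiset ℤ) = {10, 8} := by
      have h12 : ({12,10,8} : Multiset ℤ) = 12 ::ₘ {10, 8} := by decide
      rw [h12] at hperm
      exact (Multiset.cons_inj_right 12).mp hperm
    have hm : m = 10 ∨ m = 8 := by
      have : m ∈ ({10,8} : Multiset ℤ) := by rw [← hmm]; simp
      simpa using this
    rcases hm with hm | hm <;> subst hm
    · have hm' : m' = 8 := by
        have := (Multiset.cons_inj_right (10:ℤ)).mp hmm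
        simpa using this
      subst hm'
      refine abd_case u α β γ 10 12 15 D hu hu' hα hβ hγ (by tauto) ?_ hpos
      rw [hD]; push_cast; field_simp; ring
    · have hm' : m' = 10 := by
        have h' : ({10, 8} : Multiset ℤ) = 8 ::ₘ {10} := by decide
        rw [h'] at hmm
        have := (Multiset.cons_inj_right (8:ℤ)).mp hmm
        simpa using this
      subst hm'
      refine abd_case u α β γ 10 15 12 D hu hu' hα hβ hγ (by tauto) ?_ hpos
      rw [hD]; push_cast; field_simp; ring
  · have hmm : ({m, m'} : Multiset ℤ) = {12, 8} := by
      have h12 : ({12,10,8} : Multiset ℤ) = 10 ::ₘ {12, 8} := by decide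
      rw [h12] at hperm
      exact (Multiset.cons_inj_right 10).mp hperm
    have hm : m = 12 ∨ m = 8 := by
      have : m ∈ ({12,8} : Multiset ℤ) := by rw [← hmm]; simp
      simpa using this
    rcases hm with hm | hm <;> subst hm
    · have hm' : m' = 8 := by
        have := (Multiset.cons_inj_right (12:ℤ)).mp hmm
        simpa using this
      subst hm'
      refine abd_case u α β γ 12 10 15 D hu hu' hα hβ hγ (by tauto) ?_ hpos
      rw [hD]; push_cast; field_simp; ring
    · have hm' : m' = 12 := by
        have h' : ({12, 8} : Multiset ℤ) = 8 ::ₘ {12} := by decide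
        rw [h'] at hmm
        have := (Multiset.cons_inj_right (8:ℤ)).mp hmm
        simpa using this
      subst hm'
      refine abd_case u α β γ 12 15 10 D hu hu' hα hβ hγ (by tauto) ?_ hpos
      rw [hD]; push_cast; field_simp; ring
  · have hmm : ({m, m'} : Multiset ℤ) = {12, 10} := by
      have h12 : ({12,10,8} : Multiset ℤ) = 8 ::ₘ {12, 10} := by decide
      rw [h12] at hperm
      exact (Multiset.cons_inj_right 8).mp hperm
    have hm : m = 12 ∨ m = 10 := by
      have : m ∈ ({12,10} : Multiset ℤ) := by rw [← hmm]; simp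
      simpa using this
    rcases hm with hm | hm <;> subst hm
    · have hm' : m' = 10 := by
        have := (Multiset.cons_inj_right (12:ℤ)).mp hmm
        simpa using this
      subst hm'
      refine abd_case u α β γ 15 10 12 D hu hu' hα hβ hγ (by tauto) ?_ hpos
      rw [hD]; push_cast; field_simp; ring
    · have hm' : m' = 12 := by
        have h' : ({12, 10} : Multiset ℤ) = 10 ::ₘ {12} := by decide
        rw [h'] at hmm
        have := (Multiset.cons_inj_right (10:ℤ)).mp hmm
        simpa using this
      subst hm'
      refine abd_case u α β γ 15 12 10 D hu hu' hα hβ hγ (by tauto) ?_ hpos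
      rw [hD]; push_cast; field_simp; ring
end

section
/- In the graded ring R = ℂ[a, b, c]/(c² - b³ + 1728·a⁷) with deg a = 6, deg b = 14, deg c = 21, the graded piece R_i has dimension ≤ 1 for every i ≤ 41, and R₄₂ has dimension exactly 2 (spanned by a⁷ and b³). -/
open MvPolynomial

/-- The defining relation `c² - b³ + 1728·a⁷` in `ℂ[a,b,c]`, with `a = X 0`,
`b = X 1`, `c = X 2`. -/
noncomputable def kleinRel : MvPolynomial (Fin 3) ℂ :=
  X 2 ^ 2 - X 1 ^ 3 + 1728 * X 0 ^ 7

/-- The weights `deg a = 6`, `deg b = 14`, `deg c = 21`. -/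
def kleinWeight : Fin 3 → ℕ := ![6, 14, 21]

/-- The degree-`i` graded piece of `R = ℂ[a,b,c]/(c² - b³ + 1728a⁷)`, i.e. the image
of the weighted-homogeneous degree-`i` polynomials in the quotient ring. -/
noncomputable def gradedPiece (i : ℕ) :
    Submodule ℂ (MvPolynomial (Fin 3) ℂ ⧸ Ideal.span {kleinRel}) :=
  (weightedHomogeneousSubmodule ℂ kleinWeight i).map
    (Ideal.Quotient.mkₐ ℂ (Ideal.span {kleinRel})).toLinearMap

lemma wd_apply (d : Fin 3 →₀ ℕ) :
    Finsupp.weight kleinWeight d = d 0 * 6 + d 1 * 14 + d 2 * 21 := by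
  rw [Finsupp.weight_apply, Finsupp.sum_fintype, Fin.sum_univ_three]
  · simp [kleinWeight, mul_comm]
  · intro i; simp

lemma fs_ext {d e : Fin 3 →₀ ℕ} (h0 : d 0 = e 0) (h1 : d 1 = e 1) (h2 : d 2 = e 2) : d = e := by
  ext a; fin_cases a <;> assumption

lemma hA_mem : (X 0 ^ 7 : MvPolynomial (Fin 3) ℂ) ∈ weightedHomogeneousSubmodule ℂ kleinWeight 42 := by
  rw [mem_weightedHomogeneousSubmodule, X_pow_eq_monomial]
  exact isWeightedHomogeneous_monomial _ _ _ (by rw [wd_apply]; simp)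

lemma hB_mem : (X 1 ^ 3 : MvPolynomial (Fin 3) ℂ) ∈ weightedHomogeneousSubmodule ℂ kleinWeight 42 := by
  rw [mem_weightedHomogeneousSubmodule, X_pow_eq_monomial]
  exact isWeightedHomogeneous_monomial _ _ _ (by rw [wd_apply]; simp)

lemma deg42 {e : Fin 3 →₀ ℕ} (he : Finsupp.weight kleinWeight e = 42) :
    e = Finsupp.single 0 7 ∨ e = Finsupp.single 1 3 ∨ e = Finsupp.single 2 2 := by
  rw [wd_apply] at he
  have h : (e 0 = 7 ∧ e 1 = 0 ∧ e 2 = 0) ∨ (e 0 = 0 ∧ e 1 = 3 ∧ e 2 = 0) ∨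
      (e 0 = 0 ∧ e 1 = 0 ∧ e 2 = 2) := by omega
  rcases h with ⟨a, b, c⟩ | ⟨a, b, c⟩ | ⟨a, b, c⟩
  · exact Or.inl (fs_ext (by simp [a]) (by simp [b]) (by simp [c]))
  · exact Or.inr (Or.inl (fs_ext (by simp [a]) (by simp [b]) (by simp [c])))
  · exact Or.inr (Or.inr (fs_ext (by simp [a]) (by simp [b]) (by simp [c])))

lemma part3 : gradedPiece 42 = Submodule.span ℂ
    {Ideal.Quotient.mkₐ ℂ (Ideal.span {kleinRel}) (X 0 ^ 7),
     Ideal.Quotient.mkₐ ℂ (Ideal.span {kleinRel}) (X 1 ^ 3)} := by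
  apply le_antisymm
  · rintro x ⟨p, hp, rfl⟩
    rw [SetLike.mem_coe, mem_weightedHomogeneousSubmodule] at hp
    set da := Finsupp.single (0 : Fin 3) 7 with hda
    set db := Finsupp.single (1 : Fin 3) 3 with hdb
    set dc := Finsupp.single (2 : Fin 3) 2 with hdc
    have hab : da ≠ db := fun h => by simpa [hda, hdb] using congrArg (fun f => f 0) h
    have hac : da ≠ dc := fun h => by simpa [hda, hdc] using congrArg (fun f => f 0) h
    have hbc : db ≠ dc := fun h => by simpa [hdb, hdc] using congrArg (fun f => f 1) h
    set ca := coeff da p with hca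
    set cb := coeff db p with hcb
    set cc := coeff dc p with hcc
    have hrep : p = C ca * X 0 ^ 7 + C cb * X 1 ^ 3 + C cc * X 2 ^ 2 := by
      rw [X_pow_eq_monomial, X_pow_eq_monomial, X_pow_eq_monomial,
        C_mul_monomial, C_mul_monomial, C_mul_monomial, mul_one, mul_one, mul_one]
      ext e
      simp only [coeff_add, coeff_monomial]
      by_cases h1 : da = e
      · subst h1
        rw [if_pos rfl, if_neg (fun h => hab h.symm), if_neg (fun h => hac h.symm)]
        ring
      · by_cases h2 : db = e
        · subst h2
          rw [if_neg h1, if_pos rfl, if_neg (fun h => hbc h.symm)]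
          ring
        · by_cases h3 : dc = e
          · subst h3
            rw [if_neg h1, if_neg h2, if_pos rfl]
            ring
          · rw [if_neg h1, if_neg h2, if_neg h3]
            by_contra hne
            rcases deg42 (hp (by simpa using hne)) with h | h | h
            · exact h1 h.symm
            · exact h2 h.symm
            · exact h3 h.symm
    rw [Submodule.mem_span_pair]
    refine ⟨ca - 1728 * cc, cb + cc, ?_⟩
    rw [AlgHom.toLinearMap_apply, ← map_smul, ← map_smul, ← map_add,
      Ideal.Quotient.mkₐ_eq_mk, Ideal.Quotient.mk_eq_mk_iff_sub_mem,
      Ideal.mem_span_singleton']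
    refine ⟨-C cc, ?_⟩
    rw [hrep]
    simp only [smul_eq_C_mul, kleinRel, map_sub, map_add, map_mul, map_ofNat, C_sub, C_add, C_mul]
    ring
  · rw [Submodule.span_le]
    rintro x hx
    simp only [Set.mem_insert_iff, Set.mem_singleton_iff] at hx
    rcases hx with rfl | rfl
    · exact ⟨X 0 ^ 7, hA_mem, rfl⟩
    · exact ⟨X 1 ^ 3, hB_mem, rfl⟩

lemma sqrt_sq : (((Real.sqrt 1728 : ℝ) : ℂ))^2 = 1728 := by
  rw [← Complex.ofReal_pow, Real.sq_sqrt (by norm_num)]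
  norm_num

lemma hli : LinearIndependent ℂ
    ![Ideal.Quotient.mkₐ ℂ (Ideal.span {kleinRel}) (X 0 ^ 7),
      Ideal.Quotient.mkₐ ℂ (Ideal.span {kleinRel}) (X 1 ^ 3)] := by
  rw [LinearIndependent.pair_iff]
  intro s t hst
  have hmem : s • (X 0 ^ 7 : MvPolynomial (Fin 3) ℂ) + t • X 1 ^ 3 ∈ Ideal.span {kleinRel} := by
    rw [← Ideal.Quotient.eq_zero_iff_mem, ← Ideal.Quotient.mkₐ_eq_mk ℂ, map_add, map_smul,
      map_smul]
    exact hst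
  obtain ⟨q, hq⟩ := Ideal.mem_span_singleton'.mp hmem
  have e1 := congrArg (eval ![0, 1, 1]) hq
  have e2 := congrArg (eval ![-1, 0, ((Real.sqrt 1728 : ℝ) : ℂ)]) hq
  simp only [smul_eq_C_mul, kleinRel, map_add, map_mul, map_sub, map_ofNat, map_pow, eval_C,
    eval_X, Matrix.cons_val_zero, Matrix.cons_val_one, Matrix.head_cons,
    Matrix.cons_val_two, Matrix.tail_cons] at e1 e2
  rw [sqrt_sq] at e2
  norm_num at e1 e2
  exact ⟨e2, e1.symm⟩

lemma part2 : Module.finrank ℂ (gradedPiece 42) = 2 := by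
  rw [part3, show ({Ideal.Quotient.mkₐ ℂ (Ideal.span {kleinRel}) (X 0 ^ 7),
      Ideal.Quotient.mkₐ ℂ (Ideal.span {kleinRel}) (X 1 ^ 3)} :
      Set (MvPolynomial (Fin 3) ℂ ⧸ Ideal.span {kleinRel})) = Set.range
      ![Ideal.Quotient.mkₐ ℂ (Ideal.span {kleinRel}) (X 0 ^ 7),
        Ideal.Quotient.mkₐ ℂ (Ideal.span {kleinRel}) (X 1 ^ 3)] by
    rw [Set.pair_comm]
    simp [Matrix.range_cons, Matrix.range_empty]]
  rw [finrank_span_eq_card hli, Fintype.card_fin]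

lemma deg_unique {i : ℕ} (hi : i ≤ 41) {d e : Fin 3 →₀ ℕ}
    (hd : Finsupp.weight kleinWeight d = i) (he : Finsupp.weight kleinWeight e = i) : d = e := by
  rw [wd_apply] at hd he
  apply fs_ext <;> omega

lemma whs_le (i : ℕ) (hi : i ≤ 41) :
    ∃ v : MvPolynomial (Fin 3) ℂ,
      weightedHomogeneousSubmodule ℂ kleinWeight i ≤ Submodule.span ℂ {v} := by
  by_cases hb : weightedHomogeneousSubmodule ℂ kleinWeight i = ⊥
  · exact ⟨0, by rw [hb]; exact bot_le⟩
  · obtain ⟨p, hp, hp0⟩ := Submodule.exists_mem_ne_zero_of_ne_bot hb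
    obtain ⟨d₀, hd₀⟩ := (support_nonempty.mpr hp0)
    have hwd₀ : Finsupp.weight kleinWeight d₀ = i := hp (mem_support_iff.mp hd₀)
    refine ⟨monomial d₀ 1, fun q hq => ?_⟩
    have hq' : q = (coeff d₀ q) • monomial d₀ 1 := by
      ext e
      rw [coeff_smul, coeff_monomial]
      by_cases he : d₀ = e
      · subst he; simp
      · simp only [he, if_false, smul_zero]
        by_contra hne
        exact he (deg_unique hi hwd₀ (hq hne))
    rw [hq']
    exact Submodule.smul_mem _ _ (Submodule.mem_span_singleton_self _)

lemma part1 (i : ℕ) (hi : i ≤ 41) : Module.finrank ℂ (gradedPiece i) ≤ 1 := by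
  obtain ⟨v, hv⟩ := whs_le i hi
  set L := (Ideal.Quotient.mkₐ ℂ (Ideal.span {kleinRel})).toLinearMap with hL
  have h1 : gradedPiece i ≤ Submodule.span ℂ {L v} := by
    rw [gradedPiece, ← hL]
    calc Submodule.map L (weightedHomogeneousSubmodule ℂ kleinWeight i)
        ≤ Submodule.map L (Submodule.span ℂ {v}) := Submodule.map_mono hv
      _ = Submodule.span ℂ {L v} := by rw [Submodule.map_span, Set.image_singleton]
  have h2 : Module.finrank ℂ (Submodule.span ℂ {L v}) ≤ 1 := by
    by_cases h : L v = 0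
    · rw [h, Submodule.span_zero_singleton]
      rw [finrank_bot]
      norm_num
    · rw [finrank_span_singleton h]
  exact (Submodule.finrank_mono h1).trans h2

/-- In the graded ring `R = ℂ[a,b,c]/(c² - b³ + 1728·a⁷)` with `deg a = 6`,
`deg b = 14`, `deg c = 21`, every graded piece `R_i` with `i ≤ 41` has dimension
at most `1`, while `R₄₂` has dimension exactly `2`, spanned by `a⁷` and `b³`. -/
theorem klein_graded_ring_dimensions :
    (∀ i : ℕ, i ≤ 41 → Module.finrank ℂ (gradedPiece i) ≤ 1) ∧
    Module.finrank ℂ (gradedPiece 42) = 2 ∧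
    gradedPiece 42 = Submodule.span ℂ
      {Ideal.Quotient.mkₐ ℂ (Ideal.span {kleinRel}) (X 0 ^ 7),
       Ideal.Quotient.mkₐ ℂ (Ideal.span {kleinRel}) (X 1 ^ 3)} :=
  ⟨part1, part2, part3⟩
end

section
/- For the Klein quartic, the order-7 cyclic subgroup generated by diag(ξ⁴, ξ², ξ) (ξ a primitive 7th root of unity) acting on ℙ³ via [x:y:z:u] ↦ [ξ⁴x : ξ²y : ξz : u] has exactly three fixed points on the surface F = {x³y + y³z + z³x + u⁴ = 0} ⊂ ℙ³, namely [1:0:0:0], [0:1:0:0], [0:0:1:0]. -/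
/-- The order-7 symmetry `[x:y:z:u] ↦ [ξ⁴x : ξ²y : ξz : u]` of the quartic surface
`x³y + y³z + z³x + u⁴ = 0 ⊂ ℙ³` has exactly three fixed points, namely the
coordinate points `[1:0:0:0]`, `[0:1:0:0]`, `[0:0:1:0]`. -/
theorem fixed_points_of_order_seven_action (ξ : ℂ) (hξ : IsPrimitiveRoot ξ 7)
    (v : Fin 4 → ℂ) (hv : v ≠ 0)
    (hF : (v 0) ^ 3 * v 1 + (v 1) ^ 3 * v 2 + (v 2) ^ 3 * v 0 + (v 3) ^ 4 = 0) :
    (∃ c : ℂ, c ≠ 0 ∧ ![ξ ^ 4 * v 0, ξ ^ 2 * v 1, ξ * v 2, v 3] = c • v) ↔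
      ∃ t : ℂ, t ≠ 0 ∧
        (v = t • ![1, 0, 0, 0] ∨ v = t • ![0, 1, 0, 0] ∨ v = t • ![0, 0, 1, 0]) := by
  have hξ0 : ξ ≠ 0 := hξ.ne_zero (by norm_num)
  have key : ∀ i j : ℕ, i < 7 → j < 7 → i ≠ j → ξ ^ i ≠ ξ ^ j := by
    intro i j hi hj hij h
    exact hij (hξ.pow_inj hi hj h)
  constructor
  · rintro ⟨c, hc, heq⟩
    have h0 : ξ ^ 4 * v 0 = c * v 0 := by simpa using congrFun heq 0
    have h1 : ξ ^ 2 * v 1 = c * v 1 := by simpa using congrFun heq 1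
    have h2 : ξ * v 2 = c * v 2 := by simpa using congrFun heq 2
    have h3 : v 3 = c * v 3 := by simpa using congrFun heq 3
    by_cases hv0 : v 0 = 0
    · by_cases hv1 : v 1 = 0
      · by_cases hv2 : v 2 = 0
        · exfalso
          have hv3 : v 3 = 0 := by
            have : (v 3) ^ 4 = 0 := by
              rw [hv0, hv1, hv2] at hF; simpa using hF
            exact pow_eq_zero_iff (by norm_num) |>.mp this
          apply hv
          funext i; fin_cases i <;> simpa [hv0, hv1, hv2, hv3]
        · -- c = ξ, v 3 = 0
          have hcξ : c = ξ := (mul_right_cancel₀ hv2 h2).symm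
          have hv3 : v 3 = 0 := by
            by_contra h
            have h1c : (1 : ℂ) = c :=
              mul_right_cancel₀ h (by rw [one_mul]; exact h3)
            exact key 0 1 (by norm_num) (by norm_num) (by norm_num)
              (by rw [pow_zero, pow_one, ← hcξ]; exact h1c)
          exact ⟨v 2, hv2, Or.inr (Or.inr (by
            funext i; fin_cases i <;> simp [hv0, hv1, hv3]))⟩
      · -- c = ξ^2
        have hcξ : c = ξ ^ 2 := (mul_right_cancel₀ hv1 h1).symm
        have hv2 : v 2 = 0 := by
          by_contra h
          exact key 1 2 (by norm_num) (by norm_num) (by norm_num)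
            (by rw [pow_one]; rw [hcξ] at h2; exact mul_right_cancel₀ h h2)
        have hv3 : v 3 = 0 := by
          by_contra h
          refine key 0 2 (by norm_num) (by norm_num) (by norm_num) ?_
          rw [pow_zero]
          rw [hcξ] at h3
          exact mul_right_cancel₀ h (by linear_combination h3)
        exact ⟨v 1, hv1, Or.inr (Or.inl (by
          funext i; fin_cases i <;> simp [hv0, hv2, hv3]))⟩
    · -- c = ξ^4
      have hcξ : c = ξ ^ 4 := (mul_right_cancel₀ hv0 h0).symm
      have hv1 : v 1 = 0 := by
        by_contra h
        exact key 2 4 (by norm_num) (by norm_num) (by norm_num)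
          (by rw [hcξ] at h1; exact mul_right_cancel₀ h h1)
      have hv2 : v 2 = 0 := by
        by_contra h
        exact key 1 4 (by norm_num) (by norm_num) (by norm_num)
          (by rw [pow_one]; rw [hcξ] at h2; exact mul_right_cancel₀ h h2)
      have hv3 : v 3 = 0 := by
        by_contra h
        refine key 0 4 (by norm_num) (by norm_num) (by norm_num) ?_
        rw [pow_zero]
        rw [hcξ] at h3
        exact mul_right_cancel₀ h (by linear_combination h3)
      exact ⟨v 0, hv0, Or.inl (by
        funext i; fin_cases i <;> simp [hv1, hv2, hv3])⟩
  · rintro ⟨t, ht, h | h | h⟩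
    · refine ⟨ξ ^ 4, pow_ne_zero _ hξ0, ?_⟩
      subst h
      funext i; fin_cases i <;> simp [mul_comm]
    · refine ⟨ξ ^ 2, pow_ne_zero _ hξ0, ?_⟩
      subst h
      funext i; fin_cases i <;> simp [mul_comm]
    · refine ⟨ξ, hξ0, ?_⟩
      subst h
      funext i; fin_cases i <;> simp [mul_comm]
end
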